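/- Let n ≥ 1, let F₁,…,Fₙ : [0,1] → [0,1] be continuous non-decreasing with Fᵢ(0)=0, Fᵢ(1)=1, and entitlements w₁,…,wₙ > 0 summing to 1. Let σ be a permutation and suppose the sequential rightmost marks x₀ = 0, x_k = (rightmost z with F_{σ(k)}(z) − F_{σ(k)}(x_{k−1}) = w_{σ(k)}) are all well-defined with x_n < 1. Then there exist points y₀ = 0 ≤ y₁ ≤ ⋯ ≤ yₙ = 1 with y_k > x_k for all k ∈ {1,…,n}, such that F_{σ(k)}(y_k) − F_{σ(k)}(y_{k−1}) > w_{σ(k)} for all k; i.e., a connected strongly-proportional allocation exists. -/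
import Mathlib

open Set

/-- The rightmost `r`-mark of an agent with cumulative value `F`, starting at `x`. -/
noncomputable def rightMark (F : ℝ → ℝ) (x r : ℝ) : ℝ :=
  sSup {z | z ∈ Icc x 1 ∧ F z - F x ≤ r}

lemma rightMark_mem (F : ℝ → ℝ) (x r : ℝ) (hx : x ≤ 1) (hr : 0 ≤ r) :
    x ≤ rightMark F x r ∧ rightMark F x r ≤ 1 := by
  have hxS : x ∈ {z | z ∈ Icc x 1 ∧ F z - F x ≤ r} := by
    simp [hx, hr]
  have hbdd : BddAbove {z | z ∈ Icc x 1 ∧ F z - F x ≤ r} :=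
    ⟨1, fun z hz => hz.1.2⟩
  exact ⟨le_csSup hbdd hxS, csSup_le ⟨x, hxS⟩ fun z hz => hz.1.2⟩

lemma rightMark_lt (F : ℝ → ℝ) (x r y : ℝ) (hx : x ≤ 1) (hr : 0 ≤ r)
    (hy1 : y ≤ 1) (hy : rightMark F x r < y) : r < F y - F x := by
  by_contra h
  push_neg at h
  have hxy : x ≤ y := le_trans (rightMark_mem F x r hx hr).1 hy.le
  have hyS : y ∈ {z | z ∈ Icc x 1 ∧ F z - F x ≤ r} := ⟨⟨hxy, hy1⟩, h⟩
  have hbdd : BddAbove {z | z ∈ Icc x 1 ∧ F z - F x ≤ r} :=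
    ⟨1, fun z hz => hz.1.2⟩
  exact absurd (le_csSup hbdd hyS) (not_le.mpr hy)

theorem stmt10 (n : ℕ) (hn : 1 ≤ n) (F : Fin n → ℝ → ℝ)
    (hcont : ∀ i, ContinuousOn (F i) (Icc 0 1))
    (hmono : ∀ i, MonotoneOn (F i) (Icc 0 1))
    (h0 : ∀ i, F i 0 = 0) (h1 : ∀ i, F i 1 = 1)
    (w : Fin n → ℝ) (hw : ∀ i, 0 < w i) (hsum : ∑ i, w i = 1)
    (σ : Equiv.Perm (Fin n)) (x : Fin (n+1) → ℝ) (hx0 : x 0 = 0)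
    (hxdef : ∀ k : Fin n, w (σ k) ≤ F (σ k) 1 - F (σ k) (x k.castSucc) ∧
      x k.succ = rightMark (F (σ k)) (x k.castSucc) (w (σ k)))
    (hxn : x (Fin.last n) < 1) :
    ∃ y : Fin (n+1) → ℝ, Monotone y ∧ y 0 = 0 ∧ y (Fin.last n) = 1 ∧
      ∀ k : Fin n, x k.succ < y k.succ ∧
        w (σ k) < F (σ k) (y k.succ) - F (σ k) (y k.castSucc) := by
  -- bounds on x
  have hxb : ∀ j : ℕ, (hj : j ≤ n) → 0 ≤ x ⟨j, Nat.lt_succ_of_le hj⟩ ∧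
      x ⟨j, Nat.lt_succ_of_le hj⟩ ≤ 1 := by
    intro j
    induction j with
    | zero =>
      intro _
      have h : (⟨0, Nat.lt_succ_of_le (Nat.zero_le n)⟩ : Fin (n+1)) = 0 := rfl
      rw [h, hx0]; norm_num
    | succ j ih =>
      intro hj
      have hjn : j < n := hj
      have hjle : j ≤ n := hjn.le
      obtain ⟨hb0, hb1⟩ := ih hjle
      have hk : (⟨j, hjn⟩ : Fin n).castSucc = ⟨j, Nat.lt_succ_of_le hjle⟩ := rfl
      have hk' : (⟨j, hjn⟩ : Fin n).succ = ⟨j+1, Nat.lt_succ_of_le hj⟩ := rfl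
      have hdef := (hxdef ⟨j, hjn⟩).2
      rw [hk, hk'] at hdef
      have hm := rightMark_mem (F (σ ⟨j, hjn⟩)) (x ⟨j, Nat.lt_succ_of_le hjle⟩)
        (w (σ ⟨j, hjn⟩)) hb1 (hw _).le
      rw [← hdef] at hm
      exact ⟨le_trans hb0 hm.1, hm.2⟩
  -- main downward induction
  have key : ∀ m : ℕ, m ≤ n → ∃ y : ℕ → ℝ, y n = 1 ∧
      (∀ j (hj : j ≤ n), n - m ≤ j → x ⟨j, Nat.lt_succ_of_le hj⟩ < y j ∧ y j ≤ 1) ∧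
      (∀ j (hj : j < n), n - m ≤ j → y j < y (j+1) ∧
        w (σ ⟨j, hj⟩) < F (σ ⟨j, hj⟩) (y (j+1)) - F (σ ⟨j, hj⟩) (y j)) := by
    intro m
    induction m with
    | zero =>
      intro _
      refine ⟨fun _ => 1, rfl, ?_, ?_⟩
      · intro j hj hj'
        have h : (⟨j, Nat.lt_succ_of_le hj⟩ : Fin (n+1)) = Fin.last n :=
          Fin.ext (by simp; omega)
        rw [h]
        exact ⟨hxn, le_rfl⟩
      · intro j hj hj'; omega
    | succ m ih =>
      intro hm
      obtain ⟨y, hyn, hyb, hyp⟩ := ih (by omega)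
      set t := n - (m+1) with htdef
      have ht : t < n := by omega
      have htm : n - m = t + 1 := by omega
      set i := σ ⟨t, ht⟩ with hidef
      have hk : (⟨t, ht⟩ : Fin n).castSucc = ⟨t, Nat.lt_succ_of_le ht.le⟩ := rfl
      have hk' : (⟨t, ht⟩ : Fin n).succ = ⟨t+1, Nat.lt_succ_of_le ht⟩ := rfl
      have hdef := (hxdef ⟨t, ht⟩).2
      rw [hk, hk'] at hdef
      set xt := x ⟨t, Nat.lt_succ_of_le ht.le⟩ with hxtdef
      obtain ⟨hxt0, hxt1⟩ := hxb t ht.le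
      obtain ⟨hyt1a, hyt1b⟩ := hyb (t+1) ht (by omega)
      -- strict inequality via the mark
      have hstrict : w i < F i (y (t+1)) - F i xt := by
        apply rightMark_lt (F i) xt (w i) (y (t+1)) hxt1 (hw _).le hyt1b
        rw [← hdef]; exact hyt1a
      have hxty : xt < y (t+1) := by
        have hm2 := rightMark_mem (F i) xt (w i) hxt1 (hw _).le
        rw [← hdef] at hm2
        exact lt_of_le_of_lt hm2.1 hyt1a
      -- pick z ∈ (xt, y(t+1)) with F i z < F i (y (t+1)) - w i
      have hsub : Ioo xt (y (t+1)) ⊆ Icc (0:ℝ) 1 := fun z hz =>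
        ⟨le_trans hxt0 hz.1.le, le_trans hz.2.le hyt1b⟩
      have hne : (nhdsWithin xt (Ioo xt (y (t+1)))).NeBot := by
        apply mem_closure_iff_nhdsWithin_neBot.mp
        rw [closure_Ioo (ne_of_lt hxty)]
        exact ⟨le_rfl, hxty.le⟩
      have hcw : ContinuousWithinAt (F i) (Ioo xt (y (t+1))) xt :=
        ((hcont i).continuousWithinAt ⟨hxt0, hxt1⟩).mono hsub
      have hev : ∀ᶠ z in nhdsWithin xt (Ioo xt (y (t+1))),
          F i z < F i (y (t+1)) - w i :=
        Filter.Tendsto.eventually_lt_const (by linarith) hcw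
      have hevmem : ∀ᶠ z in nhdsWithin xt (Ioo xt (y (t+1))),
          z ∈ Ioo xt (y (t+1)) := self_mem_nhdsWithin
      obtain ⟨z, hzF, hz⟩ := (hev.and hevmem).exists
      refine ⟨Function.update y t z, ?_, ?_, ?_⟩
      · rw [Function.update_of_ne (by omega)]; exact hyn
      · intro j hj hj'
        rcases eq_or_ne j t with rfl | hjt
        · rw [Function.update_self]
          exact ⟨hz.1, le_trans hz.2.le hyt1b⟩
        · rw [Function.update_of_ne hjt]
          exact hyb j hj (by omega)
      · intro j hj hj'
        rcases eq_or_ne j t with rfl | hjt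
        · rw [Function.update_self, Function.update_of_ne (by omega)]
          exact ⟨hz.2, by rw [← hidef]; linarith⟩
        · rw [Function.update_of_ne hjt, Function.update_of_ne (by omega)]
          exact hyp j hj (by omega)
  obtain ⟨y, hyn, hyb, hyp⟩ := key n le_rfl
  refine ⟨fun k => if (k : ℕ) = 0 then 0 else y k, ?_, by simp, ?_, ?_⟩
  · apply Fin.monotone_iff_le_succ.mpr
    intro k
    have hks : ((k.succ : Fin (n+1)) : ℕ) = (k : ℕ) + 1 := rfl
    have hkc : ((k.castSucc : Fin (n+1)) : ℕ) = (k : ℕ) := rfl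
    simp only [hks, hkc]
    rcases eq_or_ne (k : ℕ) 0 with h0' | h0'
    · rw [h0']
      norm_num
      have h1y := (hyb 1 hn (by omega)).1
      have hx1 := (hxb 1 hn).1
      linarith
    · rw [if_neg h0', if_neg (by omega)]
      exact (hyp (k : ℕ) k.isLt (by omega)).1.le
  · have hlast : ((Fin.last n : Fin (n+1)) : ℕ) = n := rfl
    simp only [hlast, if_neg (by omega : n ≠ 0)]
    exact hyn
  · intro k
    have hks : ((k.succ : Fin (n+1)) : ℕ) = (k : ℕ) + 1 := rfl
    have hkc : ((k.castSucc : Fin (n+1)) : ℕ) = (k : ℕ) := rfl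
    have hkeq : (⟨(k : ℕ), k.isLt⟩ : Fin n) = k := rfl
    have hb := hyb ((k : ℕ) + 1) k.isLt (by omega)
    have hp := hyp (k : ℕ) k.isLt (by omega)
    rw [hkeq] at hp
    have hxsucc : x k.succ = x ⟨(k : ℕ) + 1, Nat.lt_succ_of_le k.isLt⟩ := rfl
    constructor
    · simp only [hks, if_neg (Nat.succ_ne_zero _)]
      rw [hxsucc]
      exact hb.1
    · simp only [hks, hkc, if_neg (Nat.succ_ne_zero _)]
      rcases eq_or_ne (k : ℕ) 0 with h0' | h0'
      · rw [h0', if_pos rfl]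
        have hy0 := hyb 0 (Nat.zero_le n) (by omega)
        have hx00 := (hxb 0 (Nat.zero_le n)).1
        have hmn : F (σ k) 0 ≤ F (σ k) (y 0) := by
          apply hmono (σ k) (by norm_num) ⟨by linarith [hy0.1], hy0.2⟩
          linarith [hy0.1]
        rw [h0 (σ k)] at hmn ⊢
        rw [h0'] at hp
        linarith [hp.2]
      · rw [if_neg h0']
        exact hp.2
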